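/- arXiv:1602.07039 — 2 statements merged into one kernel-verified Lean document; each statement's English description precedes it below -/
import Mathlib

section
/- For any connected graph G on n vertices with m > n + 1 edges, there exists a connected graph G₁ on n vertices with exactly n + 1 edges such that Kf(G₁) > Kf(G). -/
open Finset

noncomputable def lapEigs {V : Type*} [Fintype V] [DecidableEq V] (G : SimpleGraph V) :
    V → ℝ :=
  letI := Classical.decRel G.Adj
  (SimpleGraph.posSemidef_lapMatrix ℝ G).1.eigenvalues

/-- Laplacian eigenvalues sorted in non-increasing order: `mu G 0` is the largest. -/
noncomputable def mu {n : ℕ} (G : SimpleGraph (Fin n)) : Fin n → ℝ :=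
  fun i => (lapEigs G ∘ Tuple.sort (lapEigs G)) i.rev

noncomputable def kf {V : Type*} [Fintype V] [DecidableEq V] (G : SimpleGraph V) : ℝ :=
  (Fintype.card V : ℝ) * ∑ v, (lapEigs G v)⁻¹

noncomputable def treeCount {V : Type*} (G : SimpleGraph V) : ℕ :=
  Nat.card {H : SimpleGraph V // H ≤ G ∧ H.IsTree}

noncomputable def resist {V : Type*} [Fintype V] [DecidableEq V] (G : SimpleGraph V)
    (u v : V) : ℝ :=
  letI := Classical.decRel G.Adj
  let M := (G.lapMatrix ℝ + (Fintype.card V : ℝ)⁻¹ • Matrix.of (fun _ _ : V => (1 : ℝ)))⁻¹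
  M u u + M v v - M u v - M v u

noncomputable def kfR {V : Type*} [Fintype V] [DecidableEq V] (G : SimpleGraph V) : ℝ :=
  (∑ u, ∑ v, resist G u v) / 2

noncomputable def kfx {V : Type*} [Fintype V] [DecidableEq V] (G : SimpleGraph V) (x : V) : ℝ :=
  ∑ v, resist G x v

noncomputable def wiener {V : Type*} [Fintype V] (G : SimpleGraph V) : ℝ :=
  (∑ u, ∑ v, (G.dist u v : ℝ)) / 2

section Auxiliary

open Matrix SimpleGraph

set_option linter.unusedSectionVars false
set_option maxHeartbeats 1000000

/-- The regularized Laplacian matrix `L + (1/n) J`. -/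
noncomputable def Mmat {V : Type*} [Fintype V] [DecidableEq V] (G : SimpleGraph V) :
    Matrix V V ℝ :=
  letI := Classical.decRel G.Adj
  G.lapMatrix ℝ + (Fintype.card V : ℝ)⁻¹ • Matrix.of (fun _ _ : V => (1 : ℝ))

variable {V : Type*} [Fintype V] [DecidableEq V]

lemma vmv_mul (a b : V → ℝ) (M : Matrix V V ℝ) :
    vecMulVec a b * M = vecMulVec a (M.vecMul b) := by
  ext i j
  simp [vecMulVec_apply, Matrix.mul_apply, Matrix.vecMul, dotProduct, Finset.mul_sum, mul_assoc]

lemma mul_vmv (a b : V → ℝ) (M : Matrix V V ℝ) :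
    M * vecMulVec a b = vecMulVec (M.mulVec a) b := by
  ext i j
  simp [vecMulVec_apply, Matrix.mul_apply, Matrix.mulVec, dotProduct, Finset.sum_mul, mul_assoc]

lemma vmv_vmv (a b c d : V → ℝ) :
    vecMulVec a b * vecMulVec c d = (b ⬝ᵥ c) • vecMulVec a d := by
  ext i j
  simp only [vecMulVec_apply, Matrix.mul_apply, Matrix.smul_apply, dotProduct, Finset.sum_mul,
    Finset.mul_sum, smul_eq_mul]
  exact Finset.sum_congr rfl fun k _ => by ring

lemma trace_vmv (a b : V → ℝ) : (vecMulVec a b).trace = a ⬝ᵥ b := by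
  simp [Matrix.trace, vecMulVec_apply, dotProduct, Matrix.diag]

/-- Sherman–Morrison trace inequality. -/
lemma trace_inv_add_vmv_lt (A : Matrix V V ℝ) (hA : A.PosDef) (x : V → ℝ) (hx : x ≠ 0) :
    (A + vecMulVec x x)⁻¹.trace < A⁻¹.trace := by
  have hAinv : A⁻¹.PosDef := hA.inv
  have hdet : IsUnit A.det := isUnit_iff_ne_zero.mpr (ne_of_gt hA.det_pos)
  set v : V → ℝ := A⁻¹.mulVec x with hv
  have hAv : A.mulVec v = x := by
    rw [hv, Matrix.mulVec_mulVec, Matrix.mul_nonsing_inv _ hdet, Matrix.one_mulVec]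
  have hvne : v ≠ 0 := by
    intro h
    apply hx
    rw [← hAv, h, Matrix.mulVec_zero]
  set s : ℝ := x ⬝ᵥ v with hs
  have hs0 : 0 ≤ s := by
    have h1 := hAinv.posSemidef.dotProduct_mulVec_nonneg x
    simpa [hs, hv] using h1
  have hc : (0:ℝ) < 1 + s := by linarith
  set c : ℝ := (1 + s)⁻¹ with hc'
  set C : Matrix V V ℝ := A⁻¹ - c • vecMulVec v v with hC
  have hAT : Aᵀ = A := by
    have := hA.1
    rwa [Matrix.IsHermitian, conjTranspose_eq_transpose_of_trivial] at this
  have hAsymm : A⁻¹ᵀ = A⁻¹ := by rw [Matrix.transpose_nonsing_inv, hAT]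
  have hmul : (A + vecMulVec x x) * C = 1 := by
    have hxA : A⁻¹.vecMul x = v := by
      rw [← hAsymm, Matrix.vecMul_transpose, hv]
    rw [hC, Matrix.mul_sub, Matrix.add_mul, Matrix.add_mul,
      Matrix.mul_nonsing_inv _ hdet, vmv_mul, hxA, Matrix.mul_smul, Matrix.mul_smul,
      mul_vmv, hAv, vmv_vmv]
    have hxv : x ⬝ᵥ v = s := rfl
    rw [hxv]
    have hcs : c * (1 + s) = 1 := by rw [hc']; field_simp
    match_scalars <;> field_simp <;> nlinarith [hcs]
  have hBinv : (A + vecMulVec x x)⁻¹ = C := Matrix.inv_eq_right_inv hmul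
  rw [hBinv, hC, Matrix.trace_sub, Matrix.trace_smul, trace_vmv]
  have hvv : (0:ℝ) < v ⬝ᵥ v := by
    have h0 : 0 ≤ v ⬝ᵥ v := Finset.sum_nonneg fun i _ => mul_self_nonneg _
    rcases h0.lt_or_eq with h | h
    · exact h
    · exfalso
      apply hvne
      funext i
      have h2 : ∀ j ∈ Finset.univ, (0:ℝ) ≤ v j * v j := fun j _ => mul_self_nonneg _
      have h3 := (Finset.sum_eq_zero_iff_of_nonneg h2).mp h.symm i (Finset.mem_univ i)
      have h4 := mul_self_eq_zero.mp h3
      simpa using h4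
  have : 0 < c * (v ⬝ᵥ v) := mul_pos (inv_pos.mpr hc) hvv
  simp only [smul_eq_mul]
  linarith
lemma sum_inv_lapEigs_eq (G : SimpleGraph V) (hG : G.Connected) :
    ∑ v, (lapEigs G v)⁻¹ = (Mmat G)⁻¹.trace - 1 := by
  letI := Classical.decRel G.Adj
  obtain ⟨c⟩ := hG.nonempty
  have hcard : (0:ℝ) < (Fintype.card V : ℝ) := by
    exact_mod_cast Fintype.card_pos_iff.mpr ⟨c⟩
  set L : Matrix V V ℝ := G.lapMatrix ℝ with hLdef
  have hL : L.IsHermitian := (posSemidef_lapMatrix ℝ G).1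
  set U : Matrix V V ℝ := (hL.eigenvectorUnitary : Matrix V V ℝ) with hUdef
  set eig : V → ℝ := hL.eigenvalues with heig
  have hUU' : U * star U = 1 :=
    (Matrix.mem_unitaryGroup_iff).mp hL.eigenvectorUnitary.2
  have hUU : star U * U = 1 := mul_eq_one_comm.mp hUU'
  have hspec : L = U * diagonal eig * star U := by
    have := hL.spectral_theorem
    simpa [Function.comp] using this
  set N : Matrix V V ℝ := U * diagonal (fun i => (eig i)⁻¹) * star U with hNdef
  have hdiag : ∀ (d e : V → ℝ), (U * diagonal d * star U) * (U * diagonal e * star U)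
      = U * diagonal (fun i => d i * e i) * star U := by
    intro d e
    calc (U * diagonal d * star U) * (U * diagonal e * star U)
        = U * diagonal d * (star U * U) * diagonal e * star U := by
          simp only [Matrix.mul_assoc]
      _ = U * (diagonal d * diagonal e) * star U := by
          rw [hUU]; simp only [Matrix.mul_one, Matrix.mul_assoc]
      _ = U * diagonal (fun i => d i * e i) * star U := by
          rw [diagonal_mul_diagonal]
  have hsymmT : ∀ d : V → ℝ, (U * diagonal d * star U)ᵀ = U * diagonal d * star U := by
    intro d
    rw [Matrix.transpose_mul, Matrix.transpose_mul, Matrix.star_eq_conjTranspose,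
      Matrix.conjTranspose_eq_transpose_of_trivial, Matrix.transpose_transpose,
      Matrix.diagonal_transpose, Matrix.mul_assoc]
  have hLN : L * N = U * diagonal (fun i => eig i * (eig i)⁻¹) * star U := by
    rw [hspec, hNdef]; exact hdiag _ _
  set P : Matrix V V ℝ := 1 - L * N with hPdef
  have hLP : L * P = 0 := by
    have h1 : L * (L * N) = L := by
      rw [hLN, hspec, hdiag]
      have hfun : (fun i => eig i * (eig i * (eig i)⁻¹)) = eig := by
        funext i
        rcases eq_or_ne (eig i) 0 with h | h
        · rw [h]; ring
        · field_simp
      rw [hfun]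
    rw [hPdef, Matrix.mul_sub, Matrix.mul_one, h1, sub_self]
  have hPsym : Pᵀ = P := by
    rw [hPdef, Matrix.transpose_sub, Matrix.transpose_one, hLN, hsymmT, ← hLN]
  have hcols : ∀ j i i', P i j = P i' j := by
    intro j i i'
    have hker : L.mulVec (fun k => P k j) = 0 := by
      funext i0
      have h2 : (L * P) i0 j = 0 := by rw [hLP]; rfl
      simp only [Pi.zero_apply]
      rw [← h2]
      simp [Matrix.mul_apply, Matrix.mulVec, dotProduct]
    have := (lapMatrix_mulVec_eq_zero_iff_forall_reachable (G := G)).mp hker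
    exact this i i' (hG.preconnected i i')
  have hall : ∀ i j, P i j = P c c := by
    intro i j
    have h1 : P i j = P c j := hcols j i c
    have h2 : P c j = P j c := by
      have := congrFun (congrFun hPsym c) j
      simpa [Matrix.transpose_apply] using this.symm
    have h3 : P j c = P c c := hcols c j c
    rw [h1, h2, h3]
  set t : ℝ := P c c with ht
  have hPP : P * P = P := by
    have hLNLN : (L * N) * (L * N) = L * N := by
      rw [hLN, hdiag]
      have hfun : (fun i => (eig i * (eig i)⁻¹) * (eig i * (eig i)⁻¹))
          = fun i => eig i * (eig i)⁻¹ := by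
        funext i
        rcases eq_or_ne (eig i) 0 with h | h
        · rw [h]; ring
        · field_simp
      rw [hfun]
    rw [hPdef, Matrix.sub_mul, Matrix.mul_sub, Matrix.mul_sub, Matrix.one_mul, Matrix.mul_one,
      hLNLN]
    simp only [Matrix.one_mul, Matrix.mul_one]
    abel
  have htt : (Fintype.card V : ℝ) * (t * t) = t := by
    have := congrFun (congrFun hPP c) c
    rw [Matrix.mul_apply] at this
    calc (Fintype.card V : ℝ) * (t * t) = ∑ k : V, P c k * P k c := by
          rw [Finset.sum_congr rfl fun k _ => by rw [hall c k, hall k c]]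
          simp [mul_comm]
      _ = t := this
  have htne : t ≠ 0 := by
    intro h0
    have hP0 : P = 0 := by
      ext i j
      simp only [Matrix.zero_apply]
      rw [hall i j, h0]
    have hLN1 : L * N = 1 := by
      have := hPdef
      rw [hP0] at this
      have := sub_eq_zero.mp this.symm
      exact this.symm
    have hNL1 : N * L = 1 := mul_eq_one_comm.mp hLN1
    have hconst : L.mulVec (fun _ => (1:ℝ)) = 0 := lapMatrix_mulVec_const_eq_zero G
    have : (fun _ : V => (1:ℝ)) = 0 := by
      calc (fun _ : V => (1:ℝ)) = (1 : Matrix V V ℝ).mulVec (fun _ => 1) := by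
            rw [Matrix.one_mulVec]
        _ = (N * L).mulVec (fun _ => 1) := by rw [hNL1]
        _ = N.mulVec (L.mulVec (fun _ => 1)) := by rw [← Matrix.mulVec_mulVec]
        _ = 0 := by rw [hconst, Matrix.mulVec_zero]
    exact one_ne_zero (congrFun this c)
  have htval : t = (Fintype.card V : ℝ)⁻¹ := by
    have h1 : ((Fintype.card V : ℝ) * t) * t = 1 * t := by
      calc ((Fintype.card V : ℝ) * t) * t = (Fintype.card V : ℝ) * (t * t) := by ring
        _ = t := htt
        _ = 1 * t := (one_mul t).symm
    have h2 : (Fintype.card V : ℝ) * t = 1 := mul_right_cancel₀ htne h1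
    exact eq_inv_of_mul_eq_one_left (by linarith)
  have hMP : Mmat G = L + P := by
    show L + (Fintype.card V : ℝ)⁻¹ • Matrix.of (fun _ _ : V => (1 : ℝ)) = L + P
    congr 1
    ext i j
    rw [hall i j, htval]
    simp
  have hNP : N * P = 0 := by
    have h1 : N * (L * N) = N := by
      rw [hLN, hNdef, hdiag]
      have hfun : (fun i => (eig i)⁻¹ * (eig i * (eig i)⁻¹)) = fun i => (eig i)⁻¹ := by
        funext i
        rcases eq_or_ne (eig i) 0 with h | h
        · rw [h]; ring
        · field_simp
      rw [hfun]
    rw [hPdef, Matrix.mul_sub, Matrix.mul_one, h1, sub_self]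
  have hMinv : (Mmat G) * (N + P) = 1 := by
    rw [hMP, Matrix.add_mul, Matrix.mul_add, Matrix.mul_add]
    have hPN : P * N = 0 := by
      have h1 : (L * N) * N = N := by
        rw [hLN, hNdef, hdiag]
        have hfun : (fun i => (eig i * (eig i)⁻¹) * (eig i)⁻¹) = fun i => (eig i)⁻¹ := by
          funext i
          rcases eq_or_ne (eig i) 0 with h | h
          · rw [h]; ring
          · field_simp
        rw [hfun]
      rw [hPdef, Matrix.sub_mul, Matrix.one_mul, h1, sub_self]
    rw [hLP, hPN, hPP, hPdef]
    abel
  have hInv : (Mmat G)⁻¹ = N + P := Matrix.inv_eq_right_inv hMinv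
  have htrN : N.trace = ∑ v, (eig v)⁻¹ := by
    rw [hNdef, Matrix.trace_mul_cycle, hUU, Matrix.one_mul, Matrix.trace_diagonal]
  have htrP : P.trace = 1 := by
    rw [Matrix.trace]
    have h3 : ∀ i : V, P.diag i = t := fun i => hall i i
    rw [Finset.sum_congr rfl fun i _ => h3 i, Finset.sum_const, nsmul_eq_mul, htval,
      Finset.card_univ]
    field_simp
  rw [hInv, Matrix.trace_add, htrN, htrP]
  have : lapEigs G = eig := rfl
  rw [this]
  ring
lemma posDef_Mmat (G : SimpleGraph V) (hG : G.Connected) : (Mmat G).PosDef := by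
  letI := Classical.decRel G.Adj
  obtain ⟨c⟩ := hG.nonempty
  have hcard : (0:ℝ) < (Fintype.card V : ℝ) := by
    exact_mod_cast Fintype.card_pos_iff.mpr ⟨c⟩
  refine PosDef.of_dotProduct_mulVec_pos ?_ ?_
  · show (Mmat G)ᴴ = Mmat G
    have h1 := (posSemidef_lapMatrix ℝ G).1
    rw [Mmat]
    rw [conjTranspose_add, h1, conjTranspose_smul]
    simp only [star_inv₀]
    norm_num
    ext i j
    simp [Matrix.conjTranspose_apply]
  · intro x hx
    have hM : (Mmat G) *ᵥ x = (G.lapMatrix ℝ) *ᵥ x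
        + (Fintype.card V : ℝ)⁻¹ • ((Matrix.of (fun _ _ : V => (1:ℝ))) *ᵥ x) := by
      rw [Mmat, Matrix.add_mulVec, Matrix.smul_mulVec]
    have hsx : star x = x := by simp
    rw [hsx, hM, dotProduct_add, dotProduct_smul]
    have hJ : x ⬝ᵥ ((Matrix.of (fun _ _ : V => (1:ℝ))) *ᵥ x) = (∑ i, x i) * (∑ i, x i) := by
      simp [dotProduct, Matrix.mulVec, Finset.sum_mul]
    have hq0 : 0 ≤ x ⬝ᵥ (G.lapMatrix ℝ) *ᵥ x := by
      have := (posSemidef_lapMatrix ℝ G).dotProduct_mulVec_nonneg x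
      simpa using this
    rcases hq0.lt_or_eq with h | h
    · have h2 : 0 ≤ (Fintype.card V : ℝ)⁻¹ • (x ⬝ᵥ (Matrix.of (fun _ _ : V => (1:ℝ))) *ᵥ x) := by
        rw [hJ, smul_eq_mul]
        exact mul_nonneg (inv_nonneg.mpr hcard.le) (mul_self_nonneg _)
      linarith
    · have hconst : ∀ i : V, x i = x c := by
        have hzero : Matrix.toLinearMap₂' ℝ (G.lapMatrix ℝ) x x = 0 := by
          rw [Matrix.toLinearMap₂'_apply']
          exact h.symm
        have := (lapMatrix_toLinearMap₂'_apply'_eq_zero_iff_forall_reachable G x).mp hzero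
        exact fun i => this i c (hG.preconnected i c)
      have hxc : x c ≠ 0 := by
        intro h0
        apply hx
        funext i
        rw [hconst i, h0]; rfl
      have hsum : ∑ i, x i = (Fintype.card V : ℝ) * x c := by
        rw [Finset.sum_congr rfl fun i _ => hconst i, Finset.sum_const, nsmul_eq_mul,
          Finset.card_univ]
      rw [hJ, hsum, smul_eq_mul, ← h, zero_add]
      have hne : (Fintype.card V : ℝ) * x c ≠ 0 := mul_ne_zero (ne_of_gt hcard) hxc
      exact mul_pos (inv_pos.mpr hcard) (mul_self_pos.mpr hne)
lemma connected_delete_of_reachable (G : SimpleGraph V) (hG : G.Connected) {u v : V}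
    (hre : (G \ fromEdgeSet {s(u,v)}).Reachable u v) :
    (G \ fromEdgeSet {s(u,v)}).Connected := by
  have key : ∀ {a b : V}, G.Walk a b → (G \ fromEdgeSet {s(u,v)}).Reachable a b := by
    intro a b w
    induction w with
    | nil => exact Reachable.refl _
    | @cons x y z hadj p ih =>
      by_cases he : s(x, y) = s(u, v)
      · rcases Sym2.eq_iff.mp he with ⟨rfl, rfl⟩ | ⟨rfl, rfl⟩
        · exact hre.trans ih
        · exact hre.symm.trans ih
      · have hxy : (G \ fromEdgeSet {s(u,v)}).Adj x y := by
          rw [SimpleGraph.sdiff_adj, fromEdgeSet_adj]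
          exact ⟨hadj, fun hc => he hc.1⟩
        exact hxy.reachable.trans ih
    
  rw [connected_iff]
  refine ⟨fun a b => ?_, hG.nonempty⟩
  obtain ⟨w⟩ := hG.preconnected a b
  exact key w

lemma edgeSet_delete_eq (G : SimpleGraph V) {u v : V} (huv : G.Adj u v) :
    (G \ fromEdgeSet {s(u,v)}).edgeSet = G.edgeSet \ {s(u,v)} := by
  simp

lemma lap_decomp (G : SimpleGraph V) {u v : V} (huv : G.Adj u v) :
    (letI := Classical.decRel G.Adj; G.lapMatrix ℝ) =
      (letI := Classical.decRel (G \ fromEdgeSet {s(u,v)}).Adj;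
        (G \ fromEdgeSet {s(u,v)}).lapMatrix ℝ)
      + vecMulVec (fun w => if w = u then (1:ℝ) else if w = v then -1 else 0)
                  (fun w => if w = u then (1:ℝ) else if w = v then -1 else 0) := by
  letI := Classical.decRel G.Adj
  letI := Classical.decRel (G \ fromEdgeSet {s(u,v)}).Adj
  have hne : u ≠ v := huv.ne
  set x : V → ℝ := fun w => if w = u then (1:ℝ) else if w = v then -1 else 0 with hx
  set G' := G \ fromEdgeSet {s(u,v)} with hG'
  have hadj' : ∀ a b, G'.Adj a b ↔ (G.Adj a b ∧ ¬ s(a,b) = s(u,v)) := by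
    intro a b
    rw [hG', SimpleGraph.sdiff_adj, fromEdgeSet_adj]
    constructor
    · rintro ⟨h1, h2⟩
      exact ⟨h1, fun hc => h2 ⟨by simpa using hc, h1.ne⟩⟩
    · rintro ⟨h1, h2⟩
      exact ⟨h1, fun hc => h2 (by simpa using hc.1)⟩
  have hdeg : ∀ a : V, (G.degree a : ℝ) = (G'.degree a : ℝ) + x a * x a := by
    intro a
    rw [degree_eq_sum_if_adj, degree_eq_sum_if_adj]
    have hsplit : ∀ k : V, (if G.Adj a k then (1:ℝ) else 0)
        = (if G'.Adj a k then (1:ℝ) else 0)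
          + (if G.Adj a k ∧ s(a,k) = s(u,v) then (1:ℝ) else 0) := by
      intro k
      by_cases h1 : G.Adj a k
      · by_cases h2 : s(a,k) = s(u,v)
        · rw [if_pos h1, if_neg (fun hc => ((hadj' a k).mp hc).2 h2), if_pos ⟨h1, h2⟩]
          ring
        · rw [if_pos h1, if_pos ((hadj' a k).mpr ⟨h1, h2⟩), if_neg (fun hc => h2 hc.2)]
          ring
      · rw [if_neg h1, if_neg (fun hc => h1 ((hadj' a k).mp hc).1),
          if_neg (fun hc => h1 hc.1)]
        ring
    rw [Finset.sum_congr rfl fun k _ => hsplit k, Finset.sum_add_distrib]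
    congr 1
    -- ∑ k, (if G.Adj a k ∧ s(a,k) = s(u,v) then 1 else 0) = x a * x a
    by_cases hau : a = u
    · subst hau
      have : ∀ k : V, (G.Adj a k ∧ s(a,k) = s(a,v)) ↔ k = v := by
        intro k
        constructor
        · rintro ⟨h1, h2⟩
          rcases Sym2.eq_iff.mp h2 with ⟨-, rfl⟩ | ⟨h3, h4⟩
          · rfl
          · exact absurd h3 hne
        · rintro rfl
          exact ⟨huv, rfl⟩
      rw [Finset.sum_congr rfl fun k _ => by rw [if_congr (this k) rfl rfl]]
      simp [hx, hne]
    · by_cases hav : a = v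
      · subst hav
        have : ∀ k : V, (G.Adj a k ∧ s(a,k) = s(u,a)) ↔ k = u := by
          intro k
          constructor
          · rintro ⟨h1, h2⟩
            rcases Sym2.eq_iff.mp h2 with ⟨h3, -⟩ | ⟨-, h4⟩
            · exact absurd h3 (Ne.symm hne)
            · exact h4
          · rintro rfl
            exact ⟨huv.symm, Sym2.eq_swap⟩
        rw [Finset.sum_congr rfl fun k _ => by rw [if_congr (this k) rfl rfl]]
        simp [hx, hne, Ne.symm hne]
      · have : ∀ k : V, ¬(G.Adj a k ∧ s(a,k) = s(u,v)) := by
          rintro k ⟨h1, h2⟩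
          rcases Sym2.eq_iff.mp h2 with ⟨h3, -⟩ | ⟨h4, -⟩
          · exact hau h3
          · exact hav h4
        rw [Finset.sum_congr rfl fun k _ => by rw [if_neg (this k)]]
        simp [hx, hau, hav]
  ext i j
  simp only [lapMatrix, degMatrix, adjMatrix, Matrix.sub_apply, Matrix.add_apply,
    Matrix.diagonal_apply, Matrix.of_apply, vecMulVec_apply]
  have hbeta : ∀ w : V, (if w = u then (1:ℝ) else if w = v then -1 else 0) = x w := fun w => rfl
  rw [show ((fun w => if w = u then (1:ℝ) else if w = v then -1 else 0) i
      * (fun w => if w = u then (1:ℝ) else if w = v then -1 else 0) j) = x i * x j from rfl]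
  by_cases hij : i = j
  · subst hij
    rw [if_pos rfl, if_pos rfl, hdeg i]
    have hGadj : ¬ G.Adj i i := G.loopless.irrefl i
    have hG'adj : ¬ G'.Adj i i := G'.loopless.irrefl i
    rw [if_neg hGadj, if_neg hG'adj]
    rw [sub_zero, sub_zero]
    congr 1
    norm_cast
    exact congrArg (fun h => @SimpleGraph.degree V G' i h) (Subsingleton.elim _ _)
  · rw [if_neg hij, if_neg hij]
    by_cases h1 : G.Adj i j
    · by_cases h2 : s(i,j) = s(u,v)
      · rw [if_pos h1, if_neg (fun hc => ((hadj' i j).mp hc).2 h2)]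
        rcases Sym2.eq_iff.mp h2 with ⟨rfl, rfl⟩ | ⟨rfl, rfl⟩
        · simp [hx, hne, Ne.symm hne]
        · simp [hx, hne, Ne.symm hne]
      · rw [if_pos h1, if_pos ((hadj' i j).mpr ⟨h1, h2⟩)]
        have hcontra : ¬((i = u ∧ j = v) ∨ (i = v ∧ j = u)) :=
          fun hc => h2 (Sym2.eq_iff.mpr hc)
        have hxij : x i * x j = 0 := by
          by_cases hiu : i = u
          · have hj1 : j ≠ u := fun h => hij (hiu.trans h.symm)
            have hj2 : j ≠ v := fun h => hcontra (Or.inl ⟨hiu, h⟩)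
            have hxj : x j = 0 := by simp [hx, hj1, hj2]
            rw [hxj, mul_zero]
          · by_cases hiv : i = v
            · have hj1 : j ≠ u := fun h => hcontra (Or.inr ⟨hiv, h⟩)
              have hj2 : j ≠ v := fun h => hij (hiv.trans h.symm)
              have hxj : x j = 0 := by simp [hx, hj1, hj2]
              rw [hxj, mul_zero]
            · have hxi : x i = 0 := by simp [hx, hiu, hiv]
              rw [hxi, zero_mul]
        rw [hxij]
        ring
    · rw [if_neg h1, if_neg (fun hc => h1 ((hadj' i j).mp hc).1)]
      have hcontra : ¬((i = u ∧ j = v) ∨ (i = v ∧ j = u)) := by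
        rintro (⟨rfl, rfl⟩ | ⟨rfl, rfl⟩)
        · exact h1 huv
        · exact h1 huv.symm
      have hxij : x i * x j = 0 := by
        by_cases hiu : i = u
        · have hj1 : j ≠ u := fun h => hij (hiu.trans h.symm)
          have hj2 : j ≠ v := fun h => hcontra (Or.inl ⟨hiu, h⟩)
          have hxj : x j = 0 := by simp [hx, hj1, hj2]
          rw [hxj, mul_zero]
        · by_cases hiv : i = v
          · have hj1 : j ≠ u := fun h => hcontra (Or.inr ⟨hiv, h⟩)
            have hj2 : j ≠ v := fun h => hij (hiv.trans h.symm)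
            have hxj : x j = 0 := by simp [hx, hj1, hj2]
            rw [hxj, mul_zero]
          · have hxi : x i = 0 := by simp [hx, hiu, hiv]
            rw [hxi, zero_mul]
      rw [hxij]
      ring

lemma kf_lt_of_delete (G : SimpleGraph V) (hG : G.Connected) {u v : V} (huv : G.Adj u v)
    (hre : (G \ fromEdgeSet {s(u,v)}).Reachable u v) :
    kf G < kf (G \ fromEdgeSet {s(u,v)}) := by
  have hG' : (G \ fromEdgeSet {s(u,v)}).Connected := connected_delete_of_reachable G hG hre
  set x : V → ℝ := fun w => if w = u then (1:ℝ) else if w = v then -1 else 0 with hx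
  have hxne : x ≠ 0 := by
    intro h
    have := congrFun h u
    simp [hx] at this
  have hMdec : Mmat G = Mmat (G \ fromEdgeSet {s(u,v)}) + vecMulVec x x := by
    rw [Mmat, Mmat]
    rw [lap_decomp G huv]
    abel
  have htr : (Mmat G)⁻¹.trace < (Mmat (G \ fromEdgeSet {s(u,v)}))⁻¹.trace := by
    rw [hMdec]
    exact trace_inv_add_vmv_lt _ (posDef_Mmat _ hG') x hxne
  have hcard : (0:ℝ) < (Fintype.card V : ℝ) := by
    have := hG.nonempty
    exact_mod_cast Fintype.card_pos_iff.mpr this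
  rw [kf, kf, sum_inv_lapEigs_eq G hG, sum_inv_lapEigs_eq _ hG']
  have := sub_lt_sub_right htr 1
  exact mul_lt_mul_of_pos_left this hcard

lemma exists_nonbridge (G : SimpleGraph V) (hG : G.Connected)
    (h : Fintype.card V - 1 < G.edgeSet.ncard) :
    ∃ u v, G.Adj u v ∧ (G \ fromEdgeSet {s(u,v)}).Reachable u v := by
  by_contra hcon
  push_neg at hcon
  have hall : ∀ ⦃e⦄, e ∈ G.edgeSet → G.IsBridge e := by
    intro e he
    induction e with
    | h a b =>
      rw [SimpleGraph.mem_edgeSet] at he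
      rw [isBridge_iff]
      exact hcon a b he
  have hac : G.IsAcyclic := isAcyclic_iff_forall_edge_isBridge.mpr hall
  have htree : G.IsTree := ⟨hG, hac⟩
  letI := Classical.decRel G.Adj
  have hcardT := htree.card_edgeFinset
  have hcc : G.edgeSet.ncard = G.edgeFinset.card := by
    rw [← SimpleGraph.coe_edgeFinset, Set.ncard_coe_finset]
  omega

lemma edge_count_delete (G : SimpleGraph V) {u v : V} (huv : G.Adj u v) :
    (G \ fromEdgeSet {s(u,v)}).edgeSet.ncard = G.edgeSet.ncard - 1 := by
  have h1 : (G \ fromEdgeSet {s(u,v)}).edgeSet = G.edgeSet \ {s(u,v)} := by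
    simp
  rw [h1]
  exact Set.ncard_diff_singleton_of_mem (s := G.edgeSet) huv

end Auxiliary

/-- Any connected graph with more than `n + 1` edges is dominated in Kirchhoff index
by some connected graph with exactly `n + 1` edges. -/
theorem exists_n_plus_one_edges_kf_gt {n : ℕ} (G : SimpleGraph (Fin n))
    (hG : G.Connected) (hm : n + 1 < G.edgeSet.ncard) :
    ∃ G₁ : SimpleGraph (Fin n), G₁.Connected ∧ G₁.edgeSet.ncard = n + 1 ∧
      kf G < kf G₁ := by
  have key : ∀ m : ℕ, ∀ G : SimpleGraph (Fin n), G.Connected → G.edgeSet.ncard = m →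
      n + 1 < m → ∃ G₁ : SimpleGraph (Fin n), G₁.Connected ∧ G₁.edgeSet.ncard = n + 1 ∧
        kf G < kf G₁ := by
    intro m
    induction m using Nat.strong_induction_on with
    | _ m IH =>
      intro G hGc hcard hlt
      have hbig : Fintype.card (Fin n) - 1 < G.edgeSet.ncard := by
        rw [Fintype.card_fin]
        omega
      obtain ⟨u, v, huv, hre⟩ := exists_nonbridge G hGc hbig
      set G' := G \ SimpleGraph.fromEdgeSet {s(u,v)} with hG'
      have hG'c : G'.Connected := connected_delete_of_reachable G hGc hre
      have hG'card : G'.edgeSet.ncard = m - 1 := by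
        rw [hG', edge_count_delete G huv, hcard]
      have hkf : kf G < kf G' := kf_lt_of_delete G hGc huv hre
      rcases eq_or_lt_of_le (show n + 1 ≤ m - 1 by omega) with heq | hlt2
      · exact ⟨G', hG'c, by rw [hG'card, ← heq], hkf⟩
      · obtain ⟨G₁, h1, h2, h3⟩ := IH (m - 1) (by omega) G' hG'c hG'card hlt2
        exact ⟨G₁, h1, h2, lt_trans hkf h3⟩
  exact key G.edgeSet.ncard G hG rfl hm
end

section
/- For any connected graph G on n vertices, Kf(G) ≥ n − 1, with equality if and only if G is the complete graph Kₙ. -/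
open Finset

open Matrix

lemma sum_eigenvalues_eq_trace' {m : Type*} [Fintype m] [DecidableEq m] {A : Matrix m m ℝ}
    (hA : A.IsHermitian) : ∑ i, hA.eigenvalues i = A.trace := by
  rw [hA.trace_eq_sum_eigenvalues]
  simp

section aux
variable {V : Type*} [Fintype V] [DecidableEq V] (G : SimpleGraph V)

lemma lapEigs_nonneg (v : V) : 0 ≤ lapEigs G v := by
  letI := Classical.decRel G.Adj
  exact (SimpleGraph.posSemidef_lapMatrix ℝ G).eigenvalues_nonneg v

lemma sum_lapEigs :
    letI := Classical.decRel G.Adj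
    ∑ v, lapEigs G v = ∑ v, (G.degree v : ℝ) := by
  letI := Classical.decRel G.Adj
  rw [show (∑ v, lapEigs G v) = (G.lapMatrix ℝ).trace from
    sum_eigenvalues_eq_trace' (SimpleGraph.posSemidef_lapMatrix ℝ G).1]
  simp [Matrix.trace, Matrix.diag, SimpleGraph.lapMatrix, SimpleGraph.degMatrix]

/-- `n • 1 - L` is positive semidefinite. -/
lemma psd_smul_one_sub_lap :
    letI := Classical.decRel G.Adj
    (((Fintype.card V : ℝ) • 1 : Matrix V V ℝ) - G.lapMatrix ℝ).PosSemidef := by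
  letI := Classical.decRel G.Adj
  letI := Classical.decRel Gᶜ.Adj
  have hJ : (Matrix.of (fun _ _ : V => (1:ℝ))).PosSemidef := by
    refine Matrix.PosSemidef.of_dotProduct_mulVec_nonneg ?_ (fun x => ?_)
    · ext i j; simp [Matrix.conjTranspose]
    · have : star x ⬝ᵥ (Matrix.of (fun _ _ : V => (1:ℝ)) *ᵥ x) = (∑ v, x v) ^ 2 := by
        simp [dotProduct, Matrix.mulVec, sq, Finset.sum_mul, mul_comm]
      rw [this]; positivity
  have key : (((Fintype.card V : ℝ) • 1 : Matrix V V ℝ) - G.lapMatrix ℝ)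
      = Gᶜ.lapMatrix ℝ + Matrix.of (fun _ _ : V => (1:ℝ)) := by
    ext i j
    by_cases h : i = j
    · subst h
      have hdeg : Gᶜ.degree i = Fintype.card V - 1 - G.degree i := SimpleGraph.degree_compl (G := G) (v := i)
      have hlt : G.degree i < Fintype.card V := G.degree_lt_card_verts i
      simp only [Matrix.sub_apply, Matrix.add_apply, Matrix.smul_apply, Matrix.one_apply_eq,
        SimpleGraph.lapMatrix, Matrix.sub_apply, SimpleGraph.degMatrix, Matrix.of_apply,
        SimpleGraph.adjMatrix_apply, Matrix.diagonal_apply_eq, smul_eq_mul, mul_one]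
      rw [if_neg (G.irrefl), if_neg (Gᶜ.irrefl), hdeg]
      have h1 : (1:ℕ) ≤ Fintype.card V := Fintype.card_pos_iff.mpr ⟨i⟩
      push_cast [Nat.sub_sub, Nat.cast_sub (by omega : 1 + G.degree i ≤ Fintype.card V)]
      ring
    · simp only [Matrix.sub_apply, Matrix.add_apply, Matrix.smul_apply,
        Matrix.one_apply_ne h, SimpleGraph.lapMatrix, Matrix.sub_apply, SimpleGraph.degMatrix,
        Matrix.of_apply, SimpleGraph.adjMatrix_apply, Matrix.diagonal_apply_ne _ h,
        smul_eq_mul, mul_zero, SimpleGraph.compl_adj]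
      by_cases hadj : G.Adj i j
      · simp [hadj, h]
      · rw [if_neg hadj, if_pos ⟨h, hadj⟩]; ring
  rw [key]
  exact (SimpleGraph.posSemidef_lapMatrix ℝ Gᶜ).add hJ

lemma lapEigs_le_card (v : V) : lapEigs G v ≤ (Fintype.card V : ℝ) := by
  letI := Classical.decRel G.Adj
  have hL := (SimpleGraph.posSemidef_lapMatrix ℝ G).1
  have hpsd := psd_smul_one_sub_lap G
  set x : V → ℝ := ⇑(hL.eigenvectorBasis v) with hx
  have hxx : star x ⬝ᵥ x = 1 := by
    have h1 : ‖hL.eigenvectorBasis v‖ = 1 := hL.eigenvectorBasis.orthonormal.1 v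
    have h2 : (inner ℝ (hL.eigenvectorBasis v) (hL.eigenvectorBasis v) : ℝ)
        = star x ⬝ᵥ x := by
      rw [EuclideanSpace.inner_eq_star_dotProduct, dotProduct_comm]
    rw [← h2, real_inner_self_eq_norm_sq, h1]; norm_num
  have h2 := hpsd.dotProduct_mulVec_nonneg x
  rw [Matrix.sub_mulVec, dotProduct_sub, Matrix.smul_mulVec, Matrix.one_mulVec,
    dotProduct_smul, hL.mulVec_eigenvectorBasis, dotProduct_smul] at h2
  simp only [smul_eq_mul, ← hx, hxx, mul_one] at h2
  have : lapEigs G v = hL.eigenvalues v := rfl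
  linarith

end aux

section aux2
variable {V : Type*} [Fintype V] [DecidableEq V] (G : SimpleGraph V)

lemma card_nonzero_lapEigs (hG : G.Connected) :
    (univ.filter (fun v => lapEigs G v ≠ 0)).card = Fintype.card V - 1 := by
  classical
  letI := Classical.decRel G.Adj
  have hL := (SimpleGraph.posSemidef_lapMatrix ℝ G).1
  have hcard1 : Fintype.card G.ConnectedComponent = 1 := by
    obtain ⟨v⟩ := hG.nonempty
    rw [Fintype.card_eq_one_iff]
    refine ⟨G.connectedComponentMk v, fun c => ?_⟩
    induction c using SimpleGraph.ConnectedComponent.ind with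
    | _ w => exact SimpleGraph.ConnectedComponent.eq.mpr (hG.preconnected w v)
  have hker : Module.finrank ℝ (LinearMap.ker (Matrix.toLin' (G.lapMatrix ℝ))) = 1 := by
    rw [← G.card_connectedComponent_eq_finrank_ker_toLin'_lapMatrix, hcard1]
  have hrn := LinearMap.finrank_range_add_finrank_ker (Matrix.toLin' (G.lapMatrix ℝ))
  rw [hker, Module.finrank_fintype_fun_eq_card] at hrn
  have hrank : (G.lapMatrix ℝ).rank = Fintype.card V - 1 := by
    have : (G.lapMatrix ℝ).rank
        = Module.finrank ℝ (LinearMap.range (Matrix.toLin' (G.lapMatrix ℝ))) := by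
      rw [Matrix.toLin'_apply']; rfl
    omega
  have := hL.rank_eq_card_non_zero_eigs
  rw [hrank] at this
  rw [← Fintype.card_subtype]
  exact this.symm

end aux2

section aux3
variable {V : Type*} [Fintype V] [DecidableEq V] (G : SimpleGraph V) [DecidableRel G.Adj]

lemma degree_of_eq_top (h : G = ⊤) (v : V) : G.degree v = Fintype.card V - 1 := by
  have hnb : G.neighborFinset v = univ.erase v := by
    ext w
    simp [SimpleGraph.mem_neighborFinset, h, eq_comm, ne_comm]
  rw [SimpleGraph.degree, hnb, card_erase_of_mem (mem_univ v), card_univ]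

lemma eq_top_of_degree (h : ∀ v, G.degree v = Fintype.card V - 1) : G = ⊤ := by
  ext u v
  simp only [SimpleGraph.top_adj]
  constructor
  · exact fun h' => h'.ne
  · intro huv
    have hsub : G.neighborFinset u ⊆ univ.erase u := by
      intro w hw
      simp only [Finset.mem_erase, Finset.mem_univ, and_true]
      exact fun hwu => G.irrefl (hwu ▸ (SimpleGraph.mem_neighborFinset G u w).mp hw)
    have hcard : (univ.erase u).card ≤ (G.neighborFinset u).card := by
      rw [card_erase_of_mem (mem_univ u), card_univ, ← h u]; rfl
    have := Finset.eq_of_subset_of_card_le hsub hcard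
    have hv : v ∈ G.neighborFinset u := by
      rw [this]
      exact Finset.mem_erase.mpr ⟨huv.symm, mem_univ v⟩
    exact (SimpleGraph.mem_neighborFinset G u v).mp hv

end aux3

/-- `Kf(G) ≥ n - 1`, with equality iff `G` is complete. -/
theorem kf_ge_card_sub_one {n : ℕ} (G : SimpleGraph (Fin n)) (hG : G.Connected) :
    (n : ℝ) - 1 ≤ kf G ∧ (kf G = (n : ℝ) - 1 ↔ G = ⊤) := by
  letI := Classical.decRel G.Adj
  have hn1 : 1 ≤ n := by obtain ⟨v⟩ := hG.nonempty; exact v.pos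
  set S : Finset (Fin n) := univ.filter (fun v => lapEigs G v ≠ 0) with hSdef
  have hScard : S.card = n - 1 := by
    have := card_nonzero_lapEigs G hG
    simpa using this
  have hμ0 : ∀ v, 0 ≤ lapEigs G v := lapEigs_nonneg G
  have hμle : ∀ v, lapEigs G v ≤ (n : ℝ) := by
    intro v; simpa using lapEigs_le_card G v
  have hsum : ∑ v, lapEigs G v = ∑ v, (G.degree v : ℝ) := sum_lapEigs G
  have hdegle : ∀ v : Fin n, (G.degree v : ℝ) ≤ (n : ℝ) - 1 := by
    intro v
    have h1 := G.degree_lt_card_verts v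
    rw [Fintype.card_fin] at h1
    have h2 : G.degree v ≤ n - 1 := by omega
    calc ((G.degree v : ℝ)) ≤ ((n - 1 : ℕ) : ℝ) := by exact_mod_cast h2
      _ = (n : ℝ) - 1 := by push_cast [Nat.cast_sub hn1]; ring
  have hsum_le : ∑ v, lapEigs G v ≤ (n : ℝ) * ((n : ℝ) - 1) := by
    rw [hsum]
    calc ∑ v, (G.degree v : ℝ) ≤ ∑ _v : Fin n, ((n : ℝ) - 1) :=
          Finset.sum_le_sum (fun v _ => hdegle v)
      _ = (n : ℝ) * ((n : ℝ) - 1) := by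
          rw [Finset.sum_const, card_univ, Fintype.card_fin, nsmul_eq_mul]
  have hSsum : ∑ v ∈ S, lapEigs G v = ∑ v, lapEigs G v := by
    rw [hSdef]
    exact Finset.sum_filter_ne_zero univ
  have hSinv : ∑ v, (lapEigs G v)⁻¹ = ∑ v ∈ S, (lapEigs G v)⁻¹ := by
    symm
    apply Finset.sum_subset (Finset.filter_subset _ _)
    intro v _ hvS
    have h0 : lapEigs G v = 0 := by
      by_contra h
      exact hvS (Finset.mem_filter.mpr ⟨Finset.mem_univ v, h⟩)
    simp [h0]
  have hinv0 : 0 ≤ ∑ v ∈ S, (lapEigs G v)⁻¹ :=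
    Finset.sum_nonneg fun v _ => inv_nonneg.mpr (hμ0 v)
  have hCS : ((S.card : ℝ)) ^ 2 ≤ (∑ v ∈ S, lapEigs G v) * ∑ v ∈ S, (lapEigs G v)⁻¹ := by
    have h := Finset.sum_sq_le_sum_mul_sum_of_sq_eq_mul S (r := fun _ => (1 : ℝ))
      (f := fun v => lapEigs G v) (g := fun v => (lapEigs G v)⁻¹)
      (fun v _ => hμ0 v) (fun v _ => inv_nonneg.mpr (hμ0 v))
      (fun i hi => by
        have hne : lapEigs G i ≠ 0 := (Finset.mem_filter.mp hi).2
        simp [mul_inv_cancel₀ hne])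
    simpa using h
  have hcastS : (S.card : ℝ) = (n : ℝ) - 1 := by
    rw [hScard, Nat.cast_sub hn1]; norm_num
  have hkf : kf G = (n : ℝ) * ∑ v ∈ S, (lapEigs G v)⁻¹ := by
    rw [kf, hSinv, Fintype.card_fin]
  have hmain : (n : ℝ) - 1 ≤ kf G := by
    rcases eq_or_lt_of_le hn1 with h1 | h2
    · have hz : ((n : ℝ) - 1) = 0 := by rw [← h1]; norm_num
      rw [hkf, hz]
      have : (0:ℝ) ≤ (n:ℝ) := by positivity
      exact mul_nonneg this hinv0
    · have hNpos : (0 : ℝ) < (n : ℝ) := by positivity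
      have hN1 : (0 : ℝ) < (n : ℝ) - 1 := by
        have : (1 : ℝ) < (n : ℝ) := by exact_mod_cast h2
        linarith
      rw [hkf]
      have h3 : ((n : ℝ) - 1) ^ 2 ≤ ((n : ℝ) * ((n : ℝ) - 1)) * ∑ v ∈ S, (lapEigs G v)⁻¹ :=
        calc ((n : ℝ) - 1) ^ 2 = ((S.card : ℝ)) ^ 2 := by rw [hcastS]
          _ ≤ (∑ v ∈ S, lapEigs G v) * ∑ v ∈ S, (lapEigs G v)⁻¹ := hCS
          _ ≤ ((n : ℝ) * ((n : ℝ) - 1)) * ∑ v ∈ S, (lapEigs G v)⁻¹ :=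
              mul_le_mul_of_nonneg_right (hSsum ▸ hsum_le) hinv0
      nlinarith [h3, hinv0, hN1, hNpos]
  refine ⟨hmain, ?_, ?_⟩
  · intro heq
    by_cases hone : n = 1
    · subst hone
      ext u v
      have huv : u = v := Subsingleton.elim u v
      subst huv
      simp
    · have h2 : 1 < n := by omega
      have hN1 : (0 : ℝ) < (n : ℝ) - 1 := by
        have : (1 : ℝ) < (n : ℝ) := by exact_mod_cast h2
        linarith
      have hNpos : (0 : ℝ) < (n : ℝ) := by linarith
      have hinv : ∑ v ∈ S, (lapEigs G v)⁻¹ = ((n : ℝ) - 1) / (n : ℝ) := by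
        rw [hkf, mul_comm] at heq
        rw [eq_div_iff hNpos.ne']
        linarith
      have hge : (n : ℝ) * ((n : ℝ) - 1) ≤ ∑ v ∈ S, lapEigs G v := by
        rw [hinv, hcastS] at hCS
        have h5 : ((n:ℝ) - 1) ^ 2 * (n:ℝ) ≤ (∑ v ∈ S, lapEigs G v) * ((n:ℝ) - 1) :=
          calc ((n:ℝ) - 1) ^ 2 * (n:ℝ)
              ≤ ((∑ v ∈ S, lapEigs G v) * (((n:ℝ) - 1) / (n:ℝ))) * (n:ℝ) :=
                mul_le_mul_of_nonneg_right hCS hNpos.le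
            _ = (∑ v ∈ S, lapEigs G v) * ((n:ℝ) - 1) := by field_simp
        nlinarith [h5, hN1]
      have heqsum : ∑ v, lapEigs G v = (n : ℝ) * ((n : ℝ) - 1) :=
        le_antisymm hsum_le (by rw [← hSsum]; exact hge)
      have hdeg : ∀ v, G.degree v = n - 1 := by
        have hz : ∑ v, ((n : ℝ) - 1 - (G.degree v : ℝ)) = 0 := by
          rw [Finset.sum_sub_distrib, ← hsum, heqsum, Finset.sum_const, card_univ,
            Fintype.card_fin, nsmul_eq_mul]
          ring
        intro v
        have h0 := (Finset.sum_eq_zero_iff_of_nonneg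
          (fun v _ => by linarith [hdegle v])).mp hz v (Finset.mem_univ v)
        have h1 : (G.degree v : ℝ) = ((n - 1 : ℕ) : ℝ) := by
          rw [Nat.cast_sub hn1]; push_cast; linarith
        exact_mod_cast h1
      exact eq_top_of_degree G (by simpa [Fintype.card_fin] using hdeg)
  · intro htop
    have hdeg : ∀ v, G.degree v = n - 1 := fun v => by
      simpa [Fintype.card_fin] using degree_of_eq_top G htop v
    have hsumdeg : ∑ v, lapEigs G v = (n : ℝ) * ((n : ℝ) - 1) := by
      rw [hsum]
      rw [Finset.sum_congr rfl (fun v _ => by rw [hdeg v])]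
      rw [Finset.sum_const, card_univ, Fintype.card_fin, nsmul_eq_mul, Nat.cast_sub hn1]
      push_cast; ring
    have hall : ∀ v ∈ S, lapEigs G v = (n : ℝ) := by
      have hz : ∑ v ∈ S, ((n : ℝ) - lapEigs G v) = 0 := by
        rw [Finset.sum_sub_distrib, hSsum, hsumdeg, Finset.sum_const, hScard, nsmul_eq_mul,
          Nat.cast_sub hn1]
        push_cast; ring
      intro v hv
      have h0 := (Finset.sum_eq_zero_iff_of_nonneg
        (fun v _ => by linarith [hμle v])).mp hz v hv
      linarith
    have hSs : ∑ v ∈ S, (lapEigs G v)⁻¹ = (S.card : ℝ) * (n : ℝ)⁻¹ := by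
      rw [Finset.sum_congr rfl (fun v hv => by rw [hall v hv]), Finset.sum_const, nsmul_eq_mul]
    rw [hkf, hSs, hcastS]
    field_simp
end
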